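/- arXiv:math/0409145 — 4 statements merged into one kernel-verified Lean document; each statement's English description precedes it below -/
import Mathlib

section
/- Let k be a field of characteristic p > 0 and S an r×r matrix over k[[t]] with nonzero determinant. Then there exist an invertible matrix M over k[[t]] and an invertible matrix N over k[[t^p]] (i.e., with all entries p-th powers) such that MSN is upper triangular with diagonal entries t^{e_1},...,t^{e_r}, each entry above the diagonal in column j is a polynomial of degree less than e_j, and for each i<j the (i,j)-entry has no monomial whose exponent is congruent to e_i modulo p. -/
/-!
Row operations over `k⟦X⟧`, pivoting in each column on an entry of least order, bring `S` to upper
triangular form with diagonal entries `X ^ e i`. Among the exponent vectors `e` so attainable, also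
allowing column operations over `k⟦X^p⟧`, take the lexicographically least. For it, every entry
`(i, j)` with `i < j` has order at least `e i`: otherwise, swapping columns `i` and `j` and pivoting
again from column `i` on would attain a smaller vector. Row operations then reduce column `j` modulo
`X ^ e j`, and column operations over `k⟦X^p⟧`, from the bottom row up, clear row `i` of the
monomials `X ^ m` with `e i ≤ m` and `m ≡ e i [MOD p]`, which span `X ^ e i * k⟦X^p⟧`. Neither step
changes the diagonal, and the remaining monomials `X ^ m` with `m < e i` vanish by minimality.
-/

open PowerSeries

namespace PowerSeries

section Semiring

variable {R : Type*} [Semiring R]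

noncomputable def divXPow (d : ℕ) (f : R⟦X⟧) : R⟦X⟧ :=
  mk fun n => coeff (n + d) f

theorem constantCoeff_divXPow (d : ℕ) (f : R⟦X⟧) : constantCoeff (divXPow d f) = coeff d f := by
  rw [← coeff_zero_eq_constantCoeff_apply, divXPow, coeff_mk, zero_add]

theorem coeff_X_pow_mul_divXPow (d m : ℕ) (f : R⟦X⟧) :
    coeff m (X ^ d * divXPow d f) = if d ≤ m then coeff m f else 0 := by
  rw [coeff_X_pow_mul']
  split_ifs with h
  · rw [divXPow, coeff_mk, Nat.sub_add_cancel h]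
  · rfl

theorem X_pow_mul_divXPow {d : ℕ} {f : R⟦X⟧} (h : ∀ m < d, coeff m f = 0) :
    X ^ d * divXPow d f = f := by
  ext m
  rw [coeff_X_pow_mul_divXPow]
  split_ifs with hd
  · rfl
  · exact (h m (not_le.mp hd)).symm

theorem coeff_mul_eq_zero_of_le {f g : R⟦X⟧} {s u m : ℕ} (hf : ∀ i, s ≤ i → coeff i f = 0)
    (hg : ∀ j, u ≤ s + j → coeff j g = 0) (hm : u ≤ m) : coeff m (f * g) = 0 := by
  rw [coeff_mul]
  refine Finset.sum_eq_zero fun ⟨i, j⟩ hij => ?_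
  rw [Finset.HasAntidiagonal.mem_antidiagonal] at hij
  by_cases hi : s ≤ i
  · rw [hf i hi, zero_mul]
  · rw [hg j (by omega), mul_zero]

noncomputable def partInXPow (p : ℕ) (f : R⟦X⟧) : R⟦X⟧ :=
  mk fun n => if p ∣ n then coeff n f else 0

theorem coeff_X_pow_mul_partInXPow_divXPow (p d m : ℕ) (f : R⟦X⟧) :
    coeff m (X ^ d * partInXPow p (divXPow d f)) =
      if d ≤ m ∧ m % p = d % p then coeff m f else 0 := by
  rw [coeff_X_pow_mul']
  by_cases hdm : d ≤ m
  · rw [if_pos hdm, partInXPow, coeff_mk, divXPow, coeff_mk, Nat.sub_add_cancel hdm]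
    exact if_congr ((Nat.modEq_iff_dvd' hdm).symm.trans ⟨fun h => ⟨hdm, h.symm⟩, fun h => h.2.symm⟩)
      rfl rfl
  · rw [if_neg hdm, if_neg fun h => hdm h.1]

end Semiring

variable (R : Type*) [Ring R]

def subringXPow (p : ℕ) : Subring R⟦X⟧ where
  carrier := {f | ∀ m, ¬ p ∣ m → coeff m f = 0}
  mul_mem' {f g} hf hg m hm := by
    rw [coeff_mul]
    refine Finset.sum_eq_zero fun ⟨i, j⟩ hij => ?_
    rw [Finset.HasAntidiagonal.mem_antidiagonal] at hij
    by_cases hi : p ∣ i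
    · rw [hg j fun hj => hm (hij ▸ dvd_add hi hj), mul_zero]
    · rw [hf i hi, zero_mul]
  one_mem' m hm := by rw [coeff_one, if_neg (by rintro rfl; exact hm (dvd_zero p))]
  add_mem' hf hg m hm := by rw [map_add, hf m hm, hg m hm, add_zero]
  zero_mem' m _ := map_zero _
  neg_mem' hf m hm := by rw [map_neg, hf m hm, neg_zero]

variable {R}

theorem partInXPow_mem (p : ℕ) (f : R⟦X⟧) : partInXPow p f ∈ subringXPow R p :=
  fun m hm => by rw [partInXPow, coeff_mk, if_neg hm]

end PowerSeries

namespace Matrix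

variable {n α : Type*} [CommRing α]

section Square

variable [Fintype n] [DecidableEq n]

theorem isUnit_permMatrix (σ : Equiv.Perm n) : IsUnit (σ.permMatrix α) := by
  refine (isUnit_iff_isUnit_det _).mpr ?_
  rw [det_permutation]
  exact (Equiv.Perm.sign σ).isUnit.map (Int.castRingHom α)

theorem permMatrix_mem_matrix (S : Subring α) (σ : Equiv.Perm n) : σ.permMatrix α ∈ S.matrix := by
  intro i j
  change σ.toPEquiv.toMatrix i j ∈ S
  rw [PEquiv.toMatrix_apply]
  split_ifs
  exacts [S.one_mem, S.zero_mem]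

theorem vecMulVec_mem_matrix {S : Subring α} {u v : n → α} (hu : ∀ i, u i ∈ S)
    (hv : ∀ j, v j ∈ S) : vecMulVec u v ∈ S.matrix :=
  fun i j => S.mul_mem (hu i) (hv j)

theorem isUnit_one_add_vecMulVec {u v : n → α} (h : v ⬝ᵥ u = 0) :
    IsUnit (1 + vecMulVec u v) := by
  refine (isUnit_iff_isUnit_det _).mpr ?_
  rw [vecMulVec_eq Unit, det_one_add_replicateCol_mul_replicateRow, h, add_zero]
  exact isUnit_one

theorem one_add_vecMulVec_single_mul_apply (w : n → α) (c : n) (A : Matrix n n α) (a b : n) :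
    ((1 + vecMulVec w (Pi.single c 1)) * A) a b = A a b + w a * A c b := by
  rw [Matrix.add_mul, Matrix.one_mul, vecMulVec_mul, single_one_vecMul, add_apply,
    vecMulVec_apply, row_apply]

theorem mul_one_add_vecMulVec_single_apply (h : n → α) (c : n) (A : Matrix n n α) (a b : n) :
    (A * (1 + vecMulVec (Pi.single c 1) h)) a b = A a b + A a c * h b := by
  rw [Matrix.mul_add, Matrix.mul_one, mul_vecMulVec, mulVec_single_one, add_apply,
    vecMulVec_apply, col_apply]

end Square

section LinearOrder

variable [LinearOrder n]

theorem IsUpperTriangular.mul_apply_self [Fintype n] {A B : Matrix n n α}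
    (hA : A.IsUpperTriangular) (hB : B.IsUpperTriangular) (i : n) :
    (A * B) i i = A i i * B i i := by
  rw [mul_apply, Finset.sum_eq_single i]
  · intro j _ hji
    rcases lt_or_gt_of_ne hji with h | h
    · rw [hA h, zero_mul]
    · rw [hB h, mul_zero]
  · simp

variable [DecidableEq n] {u v : n → α}

theorem isUpperTriangular_one_add_vecMulVec (h : ∀ a b, b ≤ a → u a * v b = 0) :
    (1 + vecMulVec u v).IsUpperTriangular :=
  blockTriangular_one.add fun a b hba => h a b hba.le

theorem one_add_vecMulVec_apply_self (h : ∀ a b, b ≤ a → u a * v b = 0) (i : n) :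
    (1 + vecMulVec u v) i i = 1 := by
  rw [add_apply, one_apply_eq, vecMulVec_apply, h i i le_rfl, add_zero]

end LinearOrder

theorem exists_ne_zero_of_det_ne_zero {r : ℕ} {T : Matrix (Fin r) (Fin r) α} (hT : T.det ≠ 0)
    (c : Fin r) (h : ∀ b < c, ∀ i, b < i → T i b = 0) : ∃ a, c ≤ a ∧ T a c ≠ 0 := by
  by_contra! hc
  refine hT ?_
  rw [det_apply]
  refine Finset.sum_eq_zero fun σ _ => ?_
  obtain ⟨b, hbc, hcσ⟩ : ∃ b ≤ c, c ≤ σ b := by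
    by_contra! hσ
    have := Finset.card_le_card_of_injOn σ (s := Finset.Iic c) (t := Finset.Iio c)
      (fun b hb => by simpa using hσ b (by simpa using hb)) σ.injective.injOn
    simp at this
  rw [Finset.prod_eq_zero (Finset.mem_univ b), smul_zero]
  rcases hbc.lt_or_eq with hbc | rfl
  · exact h b hbc _ (hbc.trans_le hcσ)
  · exact hc _ hcσ

end Matrix

namespace PowerSeriesMatrix

open Matrix

variable {k : Type*} {r : ℕ}

section CommRing

variable [CommRing k]

def IsXPowTriangular (e : Fin r → ℕ) (A : Matrix (Fin r) (Fin r) k⟦X⟧) : Prop :=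
  A.IsUpperTriangular ∧ ∀ i, A i i = X ^ e i

def IsXPowTriangularUpTo (l : ℕ) (e : Fin r → ℕ) (A : Matrix (Fin r) (Fin r) k⟦X⟧) : Prop :=
  ∀ c : Fin r, (c : ℕ) < l → (∀ i, c < i → A i c = 0) ∧ A c c = X ^ e c

def IsHermiteReduced (l : ℕ) (e : Fin r → ℕ) (A : Matrix (Fin r) (Fin r) k⟦X⟧) : Prop :=
  ∀ i j : Fin r, i < j → (j : ℕ) < l → ∀ m, e j ≤ m → coeff m (A i j) = 0

def IsColReducedFrom (p l : ℕ) (e : Fin r → ℕ) (A : Matrix (Fin r) (Fin r) k⟦X⟧) : Prop :=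
  ∀ i j : Fin r, i < j → l ≤ (i : ℕ) → ∀ m, e i ≤ m → m % p = e i % p → coeff m (A i j) = 0

variable {e : Fin r → ℕ} {A U : Matrix (Fin r) (Fin r) k⟦X⟧}

theorem IsXPowTriangularUpTo.isXPowTriangular {l : ℕ} (h : IsXPowTriangularUpTo l e A)
    (hl : r ≤ l) : IsXPowTriangular e A :=
  ⟨fun i j hji => (h j (by omega)).1 i hji, fun i => (h i (by omega)).2⟩

theorem IsXPowTriangular.unipotent_mul (hA : IsXPowTriangular e A) (hU : U.IsUpperTriangular)
    (hU1 : ∀ i, U i i = 1) : IsXPowTriangular e (U * A) :=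
  ⟨BlockTriangular.mul hU hA.1, fun i => by rw [hU.mul_apply_self hA.1, hU1, one_mul, hA.2]⟩

theorem IsXPowTriangular.mul_unipotent (hA : IsXPowTriangular e A) (hU : U.IsUpperTriangular)
    (hU1 : ∀ i, U i i = 1) : IsXPowTriangular e (A * U) :=
  ⟨BlockTriangular.mul hA.1 hU, fun i => by rw [hA.1.mul_apply_self hU, hU1, mul_one, hA.2]⟩

theorem exists_hermiteReduced_step (c : Fin r) (hA : IsXPowTriangular e A)
    (hred : IsHermiteReduced c e A) :
    ∃ M, IsUnit M ∧ IsXPowTriangular e (M * A) ∧ IsHermiteReduced (c + 1) e (M * A) := by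
  let w : Fin r → k⟦X⟧ := fun a => if a < c then -divXPow (e c) (A a c) else 0
  have hw : ∀ a b, b ≤ a → w a * (Pi.single c 1 : Fin r → k⟦X⟧) b = 0 := by
    intro a b hba
    rcases eq_or_ne b c with rfl | hbc
    · simp [w, not_lt.mpr hba]
    · rw [Pi.single_eq_of_ne hbc, mul_zero]
  refine ⟨_, isUnit_one_add_vecMulVec (by simp [w]),
    hA.unipotent_mul (isUpperTriangular_one_add_vecMulVec hw) (one_add_vecMulVec_apply_self hw),
    fun i j hij hj m hm => ?_⟩
  rw [one_add_vecMulVec_single_mul_apply]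
  rcases (Nat.lt_succ_iff.mp hj).lt_or_eq with hjc | hjc
  · rw [hA.1 (show j < c from hjc), mul_zero, add_zero]
    exact hred i j hij hjc m hm
  · obtain rfl : j = c := Fin.ext hjc
    rw [hA.2, show w i = _ from if_pos hij, neg_mul, mul_comm, map_add, map_neg,
      coeff_X_pow_mul_divXPow, if_pos hm, add_neg_cancel]

theorem exists_hermiteReduced (l : ℕ) {A : Matrix (Fin r) (Fin r) k⟦X⟧}
    (hA : IsXPowTriangular e A) (hred : IsHermiteReduced l e A) :
    ∃ M, IsUnit M ∧ IsXPowTriangular e (M * A) ∧ IsHermiteReduced r e (M * A) := by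
  by_cases hl : l < r
  · obtain ⟨M, hM, hA', hred'⟩ := exists_hermiteReduced_step ⟨l, hl⟩ hA hred
    obtain ⟨M', hM', hA'', hred''⟩ := exists_hermiteReduced (l + 1) hA' hred'
    rw [← Matrix.mul_assoc] at hA'' hred''
    exact ⟨M' * M, hM'.mul hM, hA'', hred''⟩
  · refine ⟨1, isUnit_one, by rwa [Matrix.one_mul], fun i j hij _ => ?_⟩
    rw [Matrix.one_mul]
    exact hred i j hij (by omega)
termination_by r - l

theorem exists_colReduced_step (p : ℕ) (a : Fin r) (hA : IsXPowTriangular e A)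
    (hred : IsHermiteReduced r e A) (hcol : IsColReducedFrom p (a + 1) e A) :
    ∃ N, IsUnit N ∧ N ∈ (subringXPow k p).matrix ∧ IsXPowTriangular e (A * N) ∧
      IsHermiteReduced r e (A * N) ∧ IsColReducedFrom p a e (A * N) := by
  let h : Fin r → k⟦X⟧ := fun b => if a < b then -partInXPow p (divXPow (e a) (A a b)) else 0
  have hh : ∀ x b, b ≤ x → (Pi.single a 1 : Fin r → k⟦X⟧) x * h b = 0 := by
    intro x b hbx
    rcases eq_or_ne x a with rfl | hxa
    · simp [h, not_lt.mpr hbx]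
    · rw [Pi.single_eq_of_ne hxa, zero_mul]
  have hrow : ∀ b, a < b → ∀ m, coeff m (X ^ e a * h b) =
      -if e a ≤ m ∧ m % p = e a % p then coeff m (A a b) else 0 := by
    intro b hab m
    rw [show h b = _ from if_pos hab, mul_neg, map_neg, coeff_X_pow_mul_partInXPow_divXPow]
  refine ⟨_, isUnit_one_add_vecMulVec (by simp [h]), ?_,
    hA.mul_unipotent (isUpperTriangular_one_add_vecMulVec hh) (one_add_vecMulVec_apply_self hh),
    fun i j hij _ m hm => ?_, fun i j hij hai m hm hmod => ?_⟩
  · refine add_mem (one_mem _) (vecMulVec_mem_matrix (fun x => ?_) fun b => ?_)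
    · rcases eq_or_ne x a with rfl | hxa
      · rw [Pi.single_eq_same]; exact one_mem _
      · rw [Pi.single_eq_of_ne hxa]; exact zero_mem _
    · by_cases hab : a < b
      · rw [show h b = _ from if_pos hab]; exact neg_mem (partInXPow_mem p _)
      · rw [show h b = _ from if_neg hab]; exact zero_mem _
  · rw [mul_one_add_vecMulVec_single_apply, map_add, hred i j hij j.isLt m hm, zero_add]
    by_cases haj : a < j
    swap
    · simp [h, haj]
    rcases lt_trichotomy i a with hia | rfl | hai
    -- `A i a` has degree `< e a` and `h j` has degree `< e j - e a`.
    · refine coeff_mul_eq_zero_of_le (fun n hn => hred i a hia a.isLt n hn) (fun n hn => ?_) hm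
      simp only [h, if_pos haj, map_neg, partInXPow, divXPow, coeff_mk,
        hred a j haj j.isLt (n + e a) (by omega), ite_self, neg_zero]
    · rw [hA.2, hrow j haj, hred i j haj j.isLt m hm, ite_self, neg_zero]
    · rw [hA.1 hai, zero_mul, map_zero]
  · rw [mul_one_add_vecMulVec_single_apply]
    rcases (show a ≤ i from hai).lt_or_eq with hai | rfl
    · rw [hA.1 hai, zero_mul, add_zero]
      exact hcol i j hij hai m hm hmod
    · rw [hA.2, map_add, hrow j hij, if_pos ⟨hm, hmod⟩, add_neg_cancel]

theorem exists_colReduced (p l : ℕ) (hA : IsXPowTriangular e A) (hred : IsHermiteReduced r e A)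
    (hcol : IsColReducedFrom p l e A) :
    ∃ N, IsUnit N ∧ N ∈ (subringXPow k p).matrix ∧ IsXPowTriangular e (A * N) ∧
      IsHermiteReduced r e (A * N) ∧ IsColReducedFrom p 0 e (A * N) := by
  induction l generalizing A with
  | zero => exact ⟨1, isUnit_one, one_mem _, by rwa [Matrix.mul_one], by rwa [Matrix.mul_one],
      by rwa [Matrix.mul_one]⟩
  | succ l ih =>
    by_cases hl : l < r
    · obtain ⟨N, hN, hNp, hA', hred', hcol'⟩ := exists_colReduced_step p ⟨l, hl⟩ hA hred hcol
      obtain ⟨N', hN', hN'p, hA'', hred'', hcol''⟩ := ih hA' hred' hcol'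
      rw [Matrix.mul_assoc] at hA'' hred'' hcol''
      exact ⟨N * N', hN.mul hN', mul_mem hNp hN'p, hA'', hred'', hcol''⟩
    · exact ih hA hred fun i _ _ hi => absurd i.isLt (by omega)

def Reachable (p : ℕ) (S T : Matrix (Fin r) (Fin r) k⟦X⟧) : Prop :=
  ∃ M N, IsUnit M ∧ IsUnit N ∧ N ∈ (subringXPow k p).matrix ∧ T = M * S * N

def IsAttainable (p : ℕ) (S : Matrix (Fin r) (Fin r) k⟦X⟧) (e : Fin r → ℕ) : Prop :=
  ∃ T, Reachable p S T ∧ IsXPowTriangular e T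

variable {p : ℕ} {S T M N : Matrix (Fin r) (Fin r) k⟦X⟧}

theorem Reachable.refl : Reachable p S S :=
  ⟨1, 1, isUnit_one, isUnit_one, one_mem _, by rw [Matrix.one_mul, Matrix.mul_one]⟩

theorem Reachable.mul_left (h : Reachable p S T) (hM : IsUnit M) : Reachable p S (M * T) := by
  obtain ⟨M', N, hM', hN, hNp, rfl⟩ := h
  exact ⟨M * M', N, hM.mul hM', hN, hNp, by simp only [Matrix.mul_assoc]⟩

theorem Reachable.mul_right (h : Reachable p S T) (hN : IsUnit N)
    (hNp : N ∈ (subringXPow k p).matrix) : Reachable p S (T * N) := by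
  obtain ⟨M, N', hM, hN', hN'p, rfl⟩ := h
  exact ⟨M, N' * N, hM, hN'.mul hN, mul_mem hN'p hNp, by simp only [Matrix.mul_assoc]⟩

end CommRing

section Field

variable [Field k] {e : Fin r → ℕ} {p : ℕ} {S T : Matrix (Fin r) (Fin r) k⟦X⟧}

theorem det_mul_ne_zero {M : Matrix (Fin r) (Fin r) k⟦X⟧} (hM : IsUnit M) (hT : T.det ≠ 0) :
    (M * T).det ≠ 0 := by
  rw [det_mul]
  exact mul_ne_zero ((isUnit_iff_isUnit_det M).mp hM).ne_zero hT

theorem Reachable.det_ne_zero (h : Reachable p S T) (hS : S.det ≠ 0) : T.det ≠ 0 := by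
  obtain ⟨M, N, hM, hN, -, rfl⟩ := h
  rw [det_mul]
  exact mul_ne_zero (det_mul_ne_zero hM hS) ((isUnit_iff_isUnit_det N).mp hN).ne_zero

theorem exists_monic_pivot (c : Fin r) (hT : T.det ≠ 0) (hpre : IsXPowTriangularUpTo c e T) :
    ∃ M, IsUnit M ∧ ∃ v, IsXPowTriangularUpTo c e (M * T) ∧ (M * T) c c = X ^ v ∧
      (∀ a, c < a → ∀ m < v, coeff m ((M * T) a c) = 0) ∧
      ∀ a, c ≤ a → ∀ m, coeff m (T a c) ≠ 0 → v ≤ m := by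
  classical
  have hex : ∃ v a, c ≤ a ∧ coeff v (T a c) ≠ 0 := by
    obtain ⟨a, hca, ha⟩ := exists_ne_zero_of_det_ne_zero hT c fun b hb => (hpre b hb).1
    obtain ⟨v, hv⟩ := exists_coeff_ne_zero_iff_ne_zero.mpr ha
    exact ⟨v, a, hca, hv⟩
  set v := Nat.find hex
  have hmin : ∀ a, c ≤ a → ∀ m, coeff m (T a c) ≠ 0 → v ≤ m :=
    fun a ha m hm => Nat.find_min' hex ⟨a, ha, hm⟩
  have hlow : ∀ a, c ≤ a → ∀ m < v, coeff m (T a c) = 0 :=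
    fun a ha m hm => by_contra fun h => (hm.trans_le (hmin a ha m h)).false
  obtain ⟨a₀, hca₀, hv⟩ := Nat.find_spec hex
  set u := divXPow v (T a₀ c)
  have hu : constantCoeff u ≠ 0 := by rwa [constantCoeff_divXPow]
  set σ := Equiv.swap c a₀
  have hσ_lt : ∀ x < c, σ x = x :=
    fun x hx => Equiv.swap_apply_of_ne_of_ne hx.ne (hx.trans_le hca₀).ne
  have hσ_ge : ∀ x, c ≤ x → c ≤ σ x := by
    intro x hx
    rcases eq_or_ne x c with rfl | hxc
    · rwa [Equiv.swap_apply_left]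
    rcases eq_or_ne x a₀ with rfl | hxa
    · rw [Equiv.swap_apply_right]
    · rwa [Equiv.swap_apply_of_ne_of_ne hxc hxa]
  set d : Fin r → k⟦X⟧ := Function.update 1 c u⁻¹
  have hd : ∀ a, a ≠ c → d a = 1 := fun a ha => by simp [d, ha]
  have hdc : d c = u⁻¹ := by simp [d]
  have hMT : ∀ a b, (diagonal d * σ.permMatrix k⟦X⟧ * T) a b = d a * T (σ a) b := by
    intro a b
    rw [Matrix.mul_assoc, diagonal_mul, PEquiv.toMatrix_toPEquiv_mul, submatrix_apply, id]
  have hd_unit : IsUnit d := by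
    refine Pi.isUnit_iff.mpr fun a => ?_
    rcases eq_or_ne a c with rfl | ha
    · rw [hdc]
      exact IsUnit.of_mul_eq_one u (PowerSeries.inv_mul_cancel u hu)
    · rw [hd a ha]
      exact isUnit_one
  have hpivot : T a₀ c = X ^ v * u := (X_pow_mul_divXPow (hlow a₀ hca₀)).symm
  refine ⟨diagonal d * σ.permMatrix k⟦X⟧, (isUnit_diagonal.mpr hd_unit).mul (isUnit_permMatrix σ),
    v, fun b hb => ?_, ?_, fun a hca m hm => ?_, hmin⟩
  · have hbc : b < c := hb
    refine ⟨fun i hbi => ?_, ?_⟩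
    · rw [hMT, (hpre b hb).1 _ ?_, mul_zero]
      rcases lt_or_ge i c with hic | hci
      · rwa [hσ_lt i hic]
      · exact hbc.trans_le (hσ_ge i hci)
    · rw [hMT, hd b hbc.ne, one_mul, hσ_lt b hbc, (hpre b hb).2]
  · rw [hMT, Equiv.swap_apply_left, hdc, hpivot, mul_left_comm, PowerSeries.inv_mul_cancel u hu,
      mul_one]
  · rw [hMT, hd a hca.ne', one_mul]
    exact hlow _ (hσ_ge a hca.le) m hm

theorem exists_eliminate_below_pivot (c : Fin r) {v : ℕ} (hpre : IsXPowTriangularUpTo c e T)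
    (hc : T c c = X ^ v) (hbelow : ∀ a, c < a → ∀ m < v, coeff m (T a c) = 0) :
    ∃ M, IsUnit M ∧ IsXPowTriangularUpTo (c + 1) (Function.update e c v) (M * T) := by
  let w : Fin r → k⟦X⟧ := fun a => if c < a then -divXPow v (T a c) else 0
  refine ⟨1 + vecMulVec w (Pi.single c 1), isUnit_one_add_vecMulVec (by simp [w]), fun b hb => ?_⟩
  simp only [one_add_vecMulVec_single_mul_apply]
  rcases (Nat.lt_succ_iff.mp hb).lt_or_eq with hbc | hbc
  · have hbc' : b < c := hbc
    simp only [(hpre b hbc).1 c hbc', mul_zero, add_zero, Function.update_of_ne hbc'.ne]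
    exact hpre b hbc
  · obtain rfl : b = c := Fin.ext hbc
    refine ⟨fun i hi => ?_, ?_⟩
    · rw [hc, show w i = _ from if_pos hi, neg_mul, mul_comm, X_pow_mul_divXPow (hbelow i hi),
        add_neg_cancel]
    · rw [hc, show w b = 0 from if_neg (lt_irrefl b), zero_mul, add_zero, Function.update_self]

theorem exists_pivot_step (c : Fin r) (hT : T.det ≠ 0) (hpre : IsXPowTriangularUpTo c e T) :
    ∃ M, IsUnit M ∧ ∃ v, IsXPowTriangularUpTo (c + 1) (Function.update e c v) (M * T) ∧
      ∀ a, c ≤ a → ∀ m, coeff m (T a c) ≠ 0 → v ≤ m := by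
  obtain ⟨M, hM, v, hpre', hc, hbelow, hv⟩ := exists_monic_pivot c hT hpre
  obtain ⟨M', hM', h⟩ := exists_eliminate_below_pivot c hpre' hc hbelow
  rw [← Matrix.mul_assoc] at h
  exact ⟨M' * M, hM'.mul hM, v, h, hv⟩

theorem exists_isXPowTriangular (l : ℕ) {e : Fin r → ℕ} {T : Matrix (Fin r) (Fin r) k⟦X⟧}
    (hT : T.det ≠ 0) (h : IsXPowTriangularUpTo l e T) :
    ∃ M, IsUnit M ∧ ∃ e', IsXPowTriangular e' (M * T) ∧ ∀ c : Fin r, (c : ℕ) < l → e' c = e c := by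
  by_cases hl : l < r
  · obtain ⟨M, hM, v, h', -⟩ := exists_pivot_step ⟨l, hl⟩ hT h
    obtain ⟨M', hM', e', he', hagree⟩ :=
      exists_isXPowTriangular (l + 1) (det_mul_ne_zero hM hT) h'
    rw [← Matrix.mul_assoc] at he'
    refine ⟨M' * M, hM'.mul hM, e', he', fun c hc => ?_⟩
    rw [hagree c (by omega), Function.update_of_ne (Fin.ne_of_val_ne (by simp; omega))]
  · exact ⟨1, isUnit_one, e, by rw [Matrix.one_mul]; exact h.isXPowTriangular (by omega),
      fun _ _ => rfl⟩
termination_by r - l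

theorem exists_minimal_attainable (p : ℕ) (hS : S.det ≠ 0) :
    ∃ e, IsAttainable p S e ∧ ∀ e', IsAttainable p S e' → ¬ toLex e' < toLex e := by
  obtain ⟨M, hM, e, hT, -⟩ :=
    exists_isXPowTriangular (e := 0) 0 hS fun c hc => absurd hc c.val.not_lt_zero
  obtain ⟨x, hx, hmin⟩ := wellFounded_lt.has_min {x : Lex (Fin r → ℕ) | IsAttainable p S (ofLex x)}
    ⟨toLex e, M * S, Reachable.refl.mul_left hM, hT⟩
  exact ⟨ofLex x, hx, fun e' he' => hmin (toLex e') he'⟩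

theorem coeff_eq_zero_of_minimal (hS : S.det ≠ 0)
    (hmin : ∀ e', IsAttainable p S e' → ¬ toLex e' < toLex e) (hT : Reachable p S T)
    (hTe : IsXPowTriangular e T) {i j : Fin r} (hij : i < j) {m : ℕ} (hm : m < e i) :
    coeff m (T i j) = 0 := by
  by_contra hne
  set σ := Equiv.swap i j
  have hσT : ∀ a b, (T * σ.permMatrix k⟦X⟧) a b = T a (σ b) := by
    intro a b
    rw [PEquiv.mul_toMatrix_toPEquiv, submatrix_apply, id, Equiv.symm_swap]
  have hT' := hT.mul_right (isUnit_permMatrix σ) (permMatrix_mem_matrix _ σ)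
  have hupto : IsXPowTriangularUpTo i e (T * σ.permMatrix k⟦X⟧) := by
    intro c hc
    have hσc : σ c = c :=
      Equiv.swap_apply_of_ne_of_ne (Fin.ne_of_lt hc) (Fin.ne_of_lt (hc.trans hij))
    simp only [hσT, hσc]
    exact ⟨fun a hca => hTe.1 hca, hTe.2 c⟩
  obtain ⟨M, hM, v, hpiv, hv⟩ := exists_pivot_step i (hT'.det_ne_zero hS) hupto
  obtain ⟨M', hM', e', he', hagree⟩ :=
    exists_isXPowTriangular _ ((hT'.mul_left hM).det_ne_zero hS) hpiv
  refine hmin e' ⟨_, (hT'.mul_left hM).mul_left hM', he'⟩ ⟨i, fun c hc => ?_, ?_⟩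
  · show e' c = e c
    rw [hagree c (Nat.lt_succ_of_lt hc), Function.update_of_ne (Fin.ne_of_lt hc)]
  · show e' i < e i
    rw [hagree i (Nat.lt_succ_self _), Function.update_self]
    exact (hv i le_rfl m (by rwa [hσT, Equiv.swap_apply_left])).trans_lt hm

end Field

end PowerSeriesMatrix

open PowerSeriesMatrix

theorem stmt1_general (k : Type*) [Field k] (p : ℕ) (r : ℕ)
    (S : Matrix (Fin r) (Fin r) (PowerSeries k)) (hS : S.det ≠ 0) :
    ∃ (M N : Matrix (Fin r) (Fin r) (PowerSeries k)) (e : Fin r → ℕ),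
      IsUnit M ∧ IsUnit N ∧
      (∀ i j : Fin r, ∀ m : ℕ, ¬ p ∣ m → PowerSeries.coeff m (N i j) = 0) ∧
      (∀ i j : Fin r, j < i → (M * S * N) i j = 0) ∧
      (∀ i : Fin r, (M * S * N) i i = X ^ (e i)) ∧
      (∀ i j : Fin r, i < j → ∀ m : ℕ, e j ≤ m →
        PowerSeries.coeff m ((M * S * N) i j) = 0) ∧
      (∀ i j : Fin r, i < j → ∀ m : ℕ, m % p = e i % p →
        PowerSeries.coeff m ((M * S * N) i j) = 0) := by
  obtain ⟨e, ⟨T, hT, hTe⟩, hmin⟩ := exists_minimal_attainable p hS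
  obtain ⟨M, hM, hMT, hred⟩ :=
    exists_hermiteReduced 0 hTe fun _ _ _ h => absurd h (Nat.not_lt_zero _)
  obtain ⟨N, hN, hNp, hMTN, hred', hcol⟩ :=
    exists_colReduced p r hMT hred fun i _ _ hi => absurd i.isLt (Nat.not_lt.mpr hi)
  obtain ⟨M', N', hM', hN', hN'p, heq⟩ := (hT.mul_left hM).mul_right hN hNp
  rw [heq] at hMTN hred' hcol
  refine ⟨M', N', e, hM', hN', hN'p, fun i j hji => hMTN.1 hji, hMTN.2,
    fun i j hij m hm => hred' i j hij j.isLt m hm, fun i j hij m hmod => ?_⟩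
  rcases le_or_gt (e i) m with hm | hm
  · exact hcol i j hij (Nat.zero_le _) m hm hmod
  · exact coeff_eq_zero_of_minimal hS hmin ⟨M', N', hM', hN', hN'p, rfl⟩ hMTN hij hm

/-- In characteristic `p`, an `r × r` matrix over `k⟦t⟧` with nonzero determinant can be
brought, by an invertible row operation matrix `M` over `k⟦t⟧` and an invertible column
operation matrix `N` with entries in `k⟦t^p⟧` (no coefficients in degrees not divisible
by `p`), to upper triangular form with diagonal `t^{e_i}`, entries above the diagonal in
column `j` polynomials of degree `< e_j`, and the `(i,j)` entry (for `i < j`) having no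
monomial whose exponent is congruent to `e_i` mod `p`. -/
theorem stmt1 (k : Type*) [Field k] (p : ℕ) [hp : Fact p.Prime] [CharP k p] (r : ℕ)
    (S : Matrix (Fin r) (Fin r) (PowerSeries k)) (hS : S.det ≠ 0) :
    ∃ (M N : Matrix (Fin r) (Fin r) (PowerSeries k)) (e : Fin r → ℕ),
      IsUnit M ∧ IsUnit N ∧
      (∀ i j : Fin r, ∀ m : ℕ, ¬ p ∣ m → PowerSeries.coeff m (N i j) = 0) ∧
      (∀ i j : Fin r, j < i → (M * S * N) i j = 0) ∧
      (∀ i : Fin r, (M * S * N) i i = X ^ (e i)) ∧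
      (∀ i j : Fin r, i < j → ∀ m : ℕ, e j ≤ m →
        PowerSeries.coeff m ((M * S * N) i j) = 0) ∧
      (∀ i j : Fin r, i < j → ∀ m : ℕ, m % p = e i % p →
        PowerSeries.coeff m ((M * S * N) i j) = 0) :=
  stmt1_general k p r S hS
end

section
/- Let k be a field of characteristic p > 0, let e ∈ F_p be nonzero, and consider the rank-one connection ∇(s) = ds + e·s·t^{-1}dt on k[[t]]. If f ∈ k[[t]] satisfies df = 0 (i.e., f ∈ k[[t^p]]) and s ∈ k[[t]] is such that t·∇(s)/dt is divisible by f in k[[t]], then there exists s' ∈ k[[t]] with ∇(f·s') = f·∇(s') = ∇(s). -/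
/-
Multiplying the `n`-th coefficient by any function of `(n : k)` commutes with multiplication
by `f`, because `f` lives in degrees `i` divisible by `p`, where `((i + j : ℕ) : k) = j`;
`nabla k e` is such an operator, with `n ↦ n + e`. So if `f * g = ∇ s` and `s'` has
coefficients `(n + e)⁻¹ gₙ`, then `f * ∇ s'` is `∇ s` with its coefficients multiplied by
`(n + e)(n + e)⁻¹`, which is `∇ s` because `a * a⁻¹ * a = a` in a field, also for `a = 0`.
-/

open PowerSeries

/-- `nabla k e s` is `t·∇(s)/dt` for the rank-one connection `∇(s) = ds + e·s·t⁻¹dt`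
on `k⟦t⟧`: for `s = Σ aᵢ tⁱ` it is `Σ (i+e) aᵢ tⁱ`. -/
noncomputable def nabla (k : Type*) [Field k] (e : ℕ) (s : PowerSeries k) : PowerSeries k :=
  PowerSeries.mk fun i => ((i : k) + (e : k)) * PowerSeries.coeff i s

namespace PowerSeries

variable {R : Type*} [CommSemiring R]

noncomputable def scaleCoeffs (c : ℕ → R) (g : R⟦X⟧) : R⟦X⟧ :=
  mk fun n => c n * coeff n g

@[simp]
theorem coeff_scaleCoeffs (c : ℕ → R) (g : R⟦X⟧) (n : ℕ) :
    coeff n (scaleCoeffs c g) = c n * coeff n g :=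
  coeff_mk _ _

theorem scaleCoeffs_scaleCoeffs (c d : ℕ → R) (g : R⟦X⟧) :
    scaleCoeffs c (scaleCoeffs d g) = scaleCoeffs (fun n => c n * d n) g := by
  ext n
  simp [mul_assoc]

theorem scaleCoeffs_natCast_mul_of_coeff_eq_zero (p : ℕ) [CharP R p] (φ : R → R) {f : R⟦X⟧}
    (hf : ∀ m : ℕ, ¬ p ∣ m → coeff m f = 0) (g : R⟦X⟧) :
    scaleCoeffs (fun n => φ n) (f * g) = f * scaleCoeffs (fun n => φ n) g := by
  ext n
  simp only [coeff_scaleCoeffs, coeff_mul, Finset.mul_sum]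
  refine Finset.sum_congr rfl fun ij hij => ?_
  rw [Finset.HasAntidiagonal.mem_antidiagonal] at hij
  by_cases hi : p ∣ ij.1
  · have hn : (n : R) = ij.2 := by
      rw [← hij, Nat.cast_add, (CharP.cast_eq_zero_iff R p _).mpr hi, zero_add]
    rw [hn, mul_left_comm]
  · simp [hf _ hi]

end PowerSeries

theorem nabla_eq_scaleCoeffs (k : Type*) [Field k] (e : ℕ) :
    nabla k e = scaleCoeffs fun n => (n : k) + e :=
  rfl

theorem nabla_mul_of_coeff_eq_zero {k : Type*} [Field k] (p : ℕ) [CharP k p] (e : ℕ)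
    {f : PowerSeries k} (hf : ∀ m : ℕ, ¬ p ∣ m → coeff m f = 0) (s : PowerSeries k) :
    nabla k e (f * s) = f * nabla k e s :=
  scaleCoeffs_natCast_mul_of_coeff_eq_zero p (fun x : k => x + e) hf s

theorem stmt4_general (k : Type*) [Field k] (p : ℕ) [CharP k p]
    (e : ℕ) (f s : PowerSeries k)
    (hf : ∀ m : ℕ, ¬ p ∣ m → PowerSeries.coeff m f = 0)
    (hdvd : f ∣ nabla k e s) :
    ∃ s' : PowerSeries k,
      nabla k e (f * s') = nabla k e s ∧ nabla k e (f * s') = f * nabla k e s' := by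
  obtain ⟨g, hg⟩ := hdvd
  let s' := scaleCoeffs (fun n => ((n : k) + e)⁻¹) g
  refine ⟨s', ?_, nabla_mul_of_coeff_eq_zero p e hf s'⟩
  calc nabla k e (f * s')
      = f * scaleCoeffs (fun n => ((n : k) + e) * ((n : k) + e)⁻¹) g := by
        rw [nabla_mul_of_coeff_eq_zero p e hf, nabla_eq_scaleCoeffs, scaleCoeffs_scaleCoeffs]
    _ = scaleCoeffs (fun n => ((n : k) + e) * ((n : k) + e)⁻¹) (nabla k e s) := by
        rw [hg, scaleCoeffs_natCast_mul_of_coeff_eq_zero p (fun x : k => (x + e) * (x + e)⁻¹) hf]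
    _ = nabla k e s := by
        simp only [nabla_eq_scaleCoeffs, scaleCoeffs_scaleCoeffs, mul_inv_mul_cancel]

/-- Divisibility lemma: in characteristic `p`, for the rank-one connection
`∇(s) = ds + e·s·t⁻¹dt` with `e ∈ 𝔽_p` nonzero, if `f ∈ k⟦t^p⟧` (i.e. `df = 0`) divides
`t·∇(s)/dt`, then there is `s'` with `∇(f·s') = f·∇(s') = ∇(s)`. -/
theorem stmt4 (k : Type*) [Field k] (p : ℕ) [hp : Fact p.Prime] [CharP k p]
    (e : ℕ) (he0 : 0 < e) (he : e < p) (f s : PowerSeries k)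
    (hf : ∀ m : ℕ, ¬ p ∣ m → PowerSeries.coeff m f = 0)
    (hdvd : f ∣ nabla k e s) :
    ∃ s' : PowerSeries k,
      nabla k e (f * s') = nabla k e s ∧ nabla k e (f * s') = f * nabla k e s' :=
  stmt4_general k p e f s hf hdvd
end

section
/- Let k be a field of characteristic p > 0 and S a 2×2 matrix over k[[t]] with entries g_{ij}, with ord_t(det S) = p. Suppose there exists c ∈ k such that, setting S' = S·U(-c) with U(-c) the upper triangular unipotent matrix with -c in position (1,2), the entries g'_{ij} of S' satisfy min{ord_t g'_{11}, ord_t g'_{21}} + min{ord_t g'_{12}, ord_t g'_{22}} ≥ p. Then there exists an invertible matrix M over k[[t]] such that M·S' is diagonal with diagonal entries t^e and t^{p-e} for some 0 ≤ e ≤ p. -/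
open PowerSeries

/-!
Right multiplication by a unipotent matrix does not change the determinant, so
`ord_t det S' = p`. If `t^a` divides the first column of `S'` and `t^b` the second, then
`S' = N · diag(t^a, t^b)`, whence `t^(a+b)` divides `det S'`; together with `a + b ≥ p` this
forces `a + b = p`, so `det N` has order `0` and `N` is invertible. Then `M = N⁻¹`.
-/

namespace Matrix

theorem det_mul_unitriangular {R : Type*} [CommRing R] (S : Matrix (Fin 2) (Fin 2) R) (x : R) :
    (S * !![1, x; 0, 1]).det = S.det := by
  rw [det_mul, det_fin_two_of]
  ring

theorem exists_eq_mul_diagonal_of_dvd {R m n : Type*} [CommSemiring R] [Fintype n]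
    [DecidableEq n] {A : Matrix m n R} {d : n → R} (h : ∀ i j, d j ∣ A i j) :
    ∃ N : Matrix m n R, A = N * diagonal d := by
  choose N hN using h
  exact ⟨of N, ext fun i j => by rw [mul_diagonal, of_apply, hN, mul_comm]⟩

theorem prod_dvd_det_of_dvd {R n : Type*} [CommRing R] [Fintype n] [DecidableEq n]
    {A : Matrix n n R} {d : n → R} (h : ∀ i j, d j ∣ A i j) : ∏ j, d j ∣ A.det := by
  obtain ⟨N, rfl⟩ := exists_eq_mul_diagonal_of_dvd h
  rw [det_mul, det_diagonal]
  exact dvd_mul_left _ _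

end Matrix

namespace PowerSeries

variable {k : Type*} [Field k]

theorem isUnit_of_not_X_dvd {f : k⟦X⟧} (h : ¬ X ∣ f) : IsUnit f := by
  rw [isUnit_iff_constantCoeff, isUnit_iff_ne_zero]
  exact fun h0 => h (X_dvd_iff.mpr h0)

theorem exists_isUnit_mul_eq_diagonal_X_pow {n : Type*} [Fintype n] [DecidableEq n]
    {A : Matrix n n k⟦X⟧} {e : n → ℕ} (hdvd : ∀ i j, X ^ e j ∣ A i j)
    (hdet : ¬ X ^ (∑ j, e j + 1) ∣ A.det) :
    ∃ M : Matrix n n k⟦X⟧, IsUnit M ∧ M * A = Matrix.diagonal fun j => X ^ e j := by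
  obtain ⟨N, rfl⟩ := Matrix.exists_eq_mul_diagonal_of_dvd hdvd
  have hN : IsUnit N := by
    refine (Matrix.isUnit_iff_isUnit_det N).mpr (isUnit_of_not_X_dvd fun hX => hdet ?_)
    rw [Matrix.det_mul, Matrix.det_diagonal, Finset.prod_pow_eq_pow_sum, pow_succ']
    exact mul_dvd_mul hX dvd_rfl
  obtain ⟨u, rfl⟩ := hN
  exact ⟨↑u⁻¹, Units.isUnit _, by rw [← mul_assoc, Units.inv_mul, one_mul]⟩

end PowerSeries

theorem stmt8_general (k : Type*) [Field k] (p : ℕ)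
    (S : Matrix (Fin 2) (Fin 2) (PowerSeries k))
    (hdet : (X : PowerSeries k) ^ p ∣ S.det ∧ ¬ (X : PowerSeries k) ^ (p + 1) ∣ S.det)
    (c : k)
    (hmin : ∃ a b : ℕ, p ≤ a + b ∧
      (X : PowerSeries k) ^ a ∣ (S * !![1, -(PowerSeries.C c); 0, 1]) 0 0 ∧
      (X : PowerSeries k) ^ a ∣ (S * !![1, -(PowerSeries.C c); 0, 1]) 1 0 ∧
      (X : PowerSeries k) ^ b ∣ (S * !![1, -(PowerSeries.C c); 0, 1]) 0 1 ∧
      (X : PowerSeries k) ^ b ∣ (S * !![1, -(PowerSeries.C c); 0, 1]) 1 1) :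
    ∃ (M : Matrix (Fin 2) (Fin 2) (PowerSeries k)) (e : ℕ), IsUnit M ∧ e ≤ p ∧
      M * (S * !![1, -(PowerSeries.C c); 0, 1]) = !![X ^ e, 0; 0, X ^ (p - e)] := by
  obtain ⟨a, b, hab, h00, h10, h01, h11⟩ := hmin
  have hdvd : ∀ i j, (X : k⟦X⟧) ^ ![a, b] j ∣ (S * !![1, -(PowerSeries.C c); 0, 1]) i j := by
    simp only [Fin.forall_fin_two]
    exact ⟨⟨h00, h01⟩, h10, h11⟩
  have hdetS' := Matrix.det_mul_unitriangular S (-(PowerSeries.C c))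
  have hdvd_det : (X : k⟦X⟧) ^ (a + b) ∣ S.det := by
    simpa [Finset.prod_pow_eq_pow_sum, hdetS'] using Matrix.prod_dvd_det_of_dvd hdvd
  have hsum : a + b = p := by
    by_contra hne
    exact hdet.2 ((pow_dvd_pow X (by omega)).trans hdvd_det)
  obtain ⟨M, hM, hMS⟩ := PowerSeries.exists_isUnit_mul_eq_diagonal_X_pow (e := ![a, b]) hdvd
    (by rw [Fin.sum_univ_two, hdetS']; exact hsum ▸ hdet.2)
  refine ⟨M, a, hM, by omega, ?_⟩
  rw [hMS, Matrix.diagonal_fin_two, ← hsum, Nat.add_sub_cancel_left]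
  rfl

/-- If a `2×2` matrix `S` over `k⟦t⟧` (char `p > 0`) has `ord_t(det S) = p` and for some
constant `c` the matrix `S' = S·U(-c)` satisfies
`min{ord g'₁₁, ord g'₂₁} + min{ord g'₁₂, ord g'₂₂} ≥ p`, then `S'` can be diagonalized by
an invertible matrix on the left, with diagonal entries `t^e`, `t^{p-e}`. -/
theorem stmt8 (k : Type*) [Field k] (p : ℕ) [hp : Fact p.Prime] [CharP k p]
    (S : Matrix (Fin 2) (Fin 2) (PowerSeries k))
    (hdet : (X : PowerSeries k) ^ p ∣ S.det ∧ ¬ (X : PowerSeries k) ^ (p + 1) ∣ S.det)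
    (c : k)
    (hmin : ∃ a b : ℕ, p ≤ a + b ∧
      (X : PowerSeries k) ^ a ∣ (S * !![1, -(PowerSeries.C c); 0, 1]) 0 0 ∧
      (X : PowerSeries k) ^ a ∣ (S * !![1, -(PowerSeries.C c); 0, 1]) 1 0 ∧
      (X : PowerSeries k) ^ b ∣ (S * !![1, -(PowerSeries.C c); 0, 1]) 0 1 ∧
      (X : PowerSeries k) ^ b ∣ (S * !![1, -(PowerSeries.C c); 0, 1]) 1 1) :
    ∃ (M : Matrix (Fin 2) (Fin 2) (PowerSeries k)) (e : ℕ), IsUnit M ∧ e ≤ p ∧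
      M * (S * !![1, -(PowerSeries.C c); 0, 1]) = !![X ^ e, 0; 0, X ^ (p - e)] :=
  stmt8_general k p S hdet c hmin
end

section
/- Let k be a field of characteristic p > 0 and let S be a 2×2 matrix over k[[t]] of the form diag(t^{e_1}, t^{e_2}) + ε·(f_{ij}) over k[[t]][ε]/(ε²), with 0 < e_1, e_2 < p. Then the matrix T = S·d(S^{-1}) equals, modulo ε², the matrix with (i,j)-entry δ_{ij}·(-e_i t^{-1}) + ε·t^{-e_j - 1}·(e_i f_{ij} - t f_{ij}'), times dt. Consequently, T has at most simple poles at t = 0 if and only if ord_t(e_i f_{ij} - t f_{ij}') ≥ e_j for all i, j. -/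
open PowerSeries

/-- The matrix `S = diag(t^{e₁}, t^{e₂}) + ε(f_ij)` over `k⟦t⟧[ε]/(ε²)`,
realized over `(k[ε]/(ε²))⟦t⟧`. -/
noncomputable def Smat (k : Type*) [Field k] (e : Fin 2 → ℕ)
    (f : Fin 2 → Fin 2 → PowerSeries k) :
    Matrix (Fin 2) (Fin 2) (PowerSeries (DualNumber k)) :=
  Matrix.of fun i j =>
    (if i = j then (X : PowerSeries (DualNumber k)) ^ e i else 0) +
      PowerSeries.C (R := DualNumber k) DualNumber.eps *
        PowerSeries.map (algebraMap k (DualNumber k)) (f i j)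

/-- `gser k e f i j = e_i f_ij - t f_ij'`. -/
noncomputable def gser (k : Type*) [Field k] (e : Fin 2 → ℕ)
    (f : Fin 2 → Fin 2 → PowerSeries k) (i j : Fin 2) : PowerSeries k :=
  PowerSeries.C (R := k) (e i : k) * f i j - X * (PowerSeries.derivative k (f i j))

/-- `Tmat = X^p · T` where `T` is the matrix with `(i,j)` entry
`δ_ij(-e_i t⁻¹) + ε t^{-e_j-1}(e_i f_ij - t f_ij')`; since `e_j < p`, `X^p·T` has
power series entries. -/
noncomputable def Tmat (k : Type*) [Field k] (p : ℕ) (e : Fin 2 → ℕ)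
    (f : Fin 2 → Fin 2 → PowerSeries k) :
    Matrix (Fin 2) (Fin 2) (PowerSeries (DualNumber k)) :=
  Matrix.of fun i j =>
    (if i = j then
        -(PowerSeries.C (R := DualNumber k) (algebraMap k (DualNumber k) (e i : k))) *
          (X : PowerSeries (DualNumber k)) ^ (p - 1)
      else 0) +
      PowerSeries.C (R := DualNumber k) DualNumber.eps *
        (X : PowerSeries (DualNumber k)) ^ (p - e j - 1) *
        PowerSeries.map (algebraMap k (DualNumber k)) (gser k e f i j)

/-!
Since `d(S⁻¹) = -S⁻¹ (dS) S⁻¹`, the identity `T = S d(S⁻¹)` is equivalent to `T S = -dS`, which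
involves no inverse; multiplied by `t^p` it is an identity of power series, checked entrywise
using `ε² = 0` and `t · d(t^e) = e t^e`. For the poles: the diagonal part of `t^p T` is divisible
by `t^(p-1)`, and its `ε`-part `ε t^(p-e_j-1) g_ij` is divisible by `t^(p-1)` exactly when
`t^(e_j)` divides `g_ij`, because `ε` kills no nonzero element of `k`.
-/

open scoped DualNumber

theorem DualNumber.eps_mul_algebraMap_eq_zero_iff {R : Type*} [CommSemiring R] {a : R} :
    ε * algebraMap R R[ε] a = 0 ↔ a = 0 := by
  simp [TrivSqZeroExt.ext_iff, TrivSqZeroExt.algebraMap_eq_inl]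

theorem Matrix.add_smul_mul_add_smul_of_mul_self_eq_zero {n R : Type*} [Fintype n] [CommRing R]
    {c : R} (hc : c * c = 0) (A B C D : Matrix n n R) :
    (A + c • B) * (C + c • D) = A * C + c • (A * D + B * C) := by
  simp only [add_mul, mul_add, Matrix.smul_mul, Matrix.mul_smul, smul_smul, hc, zero_smul,
    smul_add]
  abel

namespace PowerSeries

variable {R : Type*} [CommSemiring R]

theorem derivative_map {S : Type*} [CommSemiring S] (σ : R →+* S) (f : R⟦X⟧) :
    derivative S (map σ f) = map σ (derivative R f) := by
  ext n
  simp [coeff_derivative]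

theorem X_mul_derivative_X_pow (n : ℕ) :
    X * derivative R ((X : R⟦X⟧) ^ n) = (n : R⟦X⟧) * X ^ n := by
  rw [derivative_pow, derivative_X]
  rcases n with _ | n
  · simp
  · simp only [Nat.add_sub_cancel]
    ring

theorem X_pow_add_dvd_X_pow_mul_iff {c n : ℕ} {φ : R⟦X⟧} :
    (X : R⟦X⟧) ^ (c + n) ∣ X ^ c * φ ↔ X ^ n ∣ φ := by
  rw [pow_add]
  exact IsLeftRegular.dvd_cancel_left X_pow_mul_injective

theorem X_pow_dvd_C_eps_mul_map_iff {n : ℕ} {φ : R⟦X⟧} :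
    (X : R[ε]⟦X⟧) ^ n ∣ C ε * map (algebraMap R R[ε]) φ ↔ X ^ n ∣ φ := by
  simp only [X_pow_dvd_iff, coeff_C_mul, coeff_map, DualNumber.eps_mul_algebraMap_eq_zero_iff]

end PowerSeries

section ConnectionMatrix

open Matrix

variable (k : Type*) [Field k] (p : ℕ) (e : Fin 2 → ℕ) (f : Fin 2 → Fin 2 → k⟦X⟧)

theorem Smat_eq_diagonal_add_eps_smul :
    Smat k e f = diagonal (fun i => X ^ e i) +
      C (ε : k[ε]) • (of f).map (PowerSeries.map (algebraMap k k[ε])) := by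
  ext i j : 1
  simp [Smat, diagonal_apply]

theorem Tmat_eq_diagonal_add_eps_smul :
    Tmat k p e f = diagonal (fun i => -(e i : k[ε]⟦X⟧) * X ^ (p - 1)) +
      C (ε : k[ε]) • of fun i j =>
        X ^ (p - e j - 1) * PowerSeries.map (algebraMap k k[ε]) (gser k e f i j) := by
  ext i j : 1
  simp [Tmat, diagonal_apply, mul_assoc]

theorem Tmat_mul_Smat (he : ∀ i, e i < p) :
    Tmat k p e f * Smat k e f =
      -((X : k[ε]⟦X⟧) ^ p • (Smat k e f).map (derivative k[ε])) := by
  have hε : (C ε : k[ε]⟦X⟧) * C ε = 0 := by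
    rw [← map_mul, DualNumber.eps_mul_eps, map_zero]
  rw [Tmat_eq_diagonal_add_eps_smul, Smat_eq_diagonal_add_eps_smul,
    add_smul_mul_add_smul_of_mul_self_eq_zero hε]
  ext i l : 1
  have hpow : (X : k[ε]⟦X⟧) ^ (p - e l - 1) * X ^ e l = X ^ (p - 1) := by
    rw [← pow_add]; congr 1; have := he l; omega
  have hXp : (X : k[ε]⟦X⟧) ^ p = X ^ (p - 1) * X := by
    rw [← pow_succ]; congr 1; have := he l; omega
  simp only [Matrix.add_apply, Matrix.smul_apply, Matrix.neg_apply, Matrix.map_apply,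
    diagonal_mul_diagonal, diagonal_mul, mul_diagonal, diagonal_apply, of_apply, smul_eq_mul,
    gser, map_sub, map_mul, map_natCast, map_X, map_add, Derivation.leibniz, derivative_C,
    derivative_map, hXp]
  set F := PowerSeries.map (algebraMap k k[ε]) (f i l)
  set F' := PowerSeries.map (algebraMap k k[ε]) (derivative k (f i l))
  split_ifs with hil
  · subst hil
    linear_combination X ^ (p - 1) * X_mul_derivative_X_pow (R := k[ε]) (e i) +
      C ε * (e i * F - X * F') * hpow
  · rw [map_zero]
    linear_combination C ε * (e i * F - X * F') * hpow

theorem X_pow_sub_one_dvd_Tmat_apply_iff (i j : Fin 2) (he : e j < p) :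
    (X : k[ε]⟦X⟧) ^ (p - 1) ∣ Tmat k p e f i j ↔ (X : k⟦X⟧) ^ e j ∣ gser k e f i j := by
  have hdiag : (X : k[ε]⟦X⟧) ^ (p - 1) ∣
      diagonal (fun i => -(e i : k[ε]⟦X⟧) * X ^ (p - 1)) i j := by
    rw [diagonal_apply]
    split_ifs
    exacts [dvd_mul_left _ _, dvd_zero _]
  rw [Tmat_eq_diagonal_add_eps_smul, Matrix.add_apply, dvd_add_right hdiag, Matrix.smul_apply,
    of_apply, smul_eq_mul, mul_left_comm, show p - 1 = p - e j - 1 + e j by omega,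
    X_pow_add_dvd_X_pow_mul_iff, X_pow_dvd_C_eps_mul_map_iff]

end ConnectionMatrix

theorem stmt16_general (k : Type*) [Field k] (p : ℕ)
    (e : Fin 2 → ℕ) (he : ∀ i, 0 < e i ∧ e i < p)
    (f : Fin 2 → Fin 2 → PowerSeries k) :
    Tmat k p e f * Smat k e f =
      -(((X : PowerSeries (DualNumber k)) ^ p) •
        (Smat k e f).map (PowerSeries.derivative (DualNumber k))) ∧
    ((∀ i j : Fin 2, (X : PowerSeries (DualNumber k)) ^ (p - 1) ∣ Tmat k p e f i j) ↔
      (∀ i j : Fin 2, (X : PowerSeries k) ^ (e j) ∣ gser k e f i j)) :=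
  ⟨Tmat_mul_Smat k p e f fun i => (he i).2,
    forall₂_congr fun i j => X_pow_sub_one_dvd_Tmat_apply_iff k p e f i j (he j).2⟩

/-- For `S = diag(t^{e₁},t^{e₂}) + ε(f_ij)` with `0 < e_i < p`, the matrix
`T = S·d(S⁻¹)` is, mod `ε²`, the matrix with entries
`δ_ij(-e_i t⁻¹) + ε t^{-e_j-1}(e_i f_ij - t f_ij')` (times `dt`): equivalently, its
numerator `X^p·T` satisfies `(X^p·T)·S = -X^p·dS`.  Consequently `T` has at most simple
poles at `t = 0` iff `ord_t(e_i f_ij - t f_ij') ≥ e_j` for all `i, j`. -/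
theorem stmt16 (k : Type*) [Field k] (p : ℕ) [hp : Fact p.Prime] [CharP k p]
    (e : Fin 2 → ℕ) (he : ∀ i, 0 < e i ∧ e i < p)
    (f : Fin 2 → Fin 2 → PowerSeries k) :
    Tmat k p e f * Smat k e f =
      -(((X : PowerSeries (DualNumber k)) ^ p) •
        (Smat k e f).map (PowerSeries.derivative (DualNumber k))) ∧
    ((∀ i j : Fin 2, (X : PowerSeries (DualNumber k)) ^ (p - 1) ∣ Tmat k p e f i j) ↔
      (∀ i j : Fin 2, (X : PowerSeries k) ^ (e j) ∣ gser k e f i j)) :=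
  stmt16_general k p e he f
end
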